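/- With the setup of a parallel system of m linear limit states, the variance of the conditional expectation of the failure indicator given the subvector U_v is Var(E[1_{F_par} | U_v]) = Φ_{2m}(−[B;B]; [[R, R_v],[R_v, R]]) − Φ_m(−B; R)², where P(F_par) = Φ_m(−B; R). -/

import Mathlib

open MeasureTheory ProbabilityTheory

/-- The standard Gaussian measure on `ι → ℝ` (i.i.d. standard normal components). -/
noncomputable def stdGaussian (ι : Type*) [Fintype ι] : Measure (ι → ℝ) :=
  Measure.pi fun _ => gaussianReal 0 1

/-- A `2m × 2n` matrix whose image of a standard Gaussian is a `2m`-variate centered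
Gaussian vector with covariance `[[R, R_v], [R_v, R]]`, where `R = AAᵀ` and
`R_v = A_v A_vᵀ`: both copies share the Gaussian inputs on the columns in `v`. -/
def Mblock (m n : ℕ) (A : Matrix (Fin m) (Fin n) ℝ) (v : Finset (Fin n)) :
    Matrix (Fin m ⊕ Fin m) (Fin n ⊕ Fin n) ℝ :=
  fun i j => match i, j with
  | .inl i, .inl j => A i j
  | .inl _, .inr _ => 0
  | .inr i, .inl j => if j ∈ v then A i j else 0
  | .inr i, .inr j => if j ∈ v then 0 else A i j

open scoped Matrix

/-! Conditioning on `U_v` amounts to resampling the other coordinates: with `U'` an independent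
copy of `U`, `E[1_F | U_v] = g(U)` where `g(u) = P(v.piecewise u U' ∈ F)`. As `g(U)` is
`U_v`-measurable, `E[g(U)²] = E[g(U) 1_F(U)] = P(U ∈ F, v.piecewise U U' ∈ F)`, and
`(A U, A (v.piecewise U U'))` is `Mblock` applied to the `2n`-dimensional Gaussian `(U, U')`.
The symmetry `U ↦ -U` of the standard Gaussian turns `{β ≤ A U}` into `{A U ≤ -β}`. -/

theorem MeasureTheory.Measure.setIntegral_measureReal_prodMk_left {α β : Type*}
    [MeasurableSpace α] [MeasurableSpace β] (μ : Measure α) (ν : Measure β) [IsFiniteMeasure ν]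
    {S : Set α} {T : Set (α × β)} (hS : MeasurableSet S)
    (hT : MeasurableSet T) :
    ∫ x in S, ν.real (Prod.mk x ⁻¹' T) ∂μ = (μ.prod ν).real (Prod.fst ⁻¹' S ∩ T) := by
  have hST : MeasurableSet (Prod.fst ⁻¹' S ∩ T) := (measurable_fst hS).inter hT
  have hslice : ∀ x, S.indicator (fun x => ν.real (Prod.mk x ⁻¹' T)) x
      = ν.real (Prod.mk x ⁻¹' (Prod.fst ⁻¹' S ∩ T)) := by
    intro x
    by_cases hx : x ∈ S <;> simp [hx, Set.preimage]
  rw [← integral_indicator hS, funext hslice, measureReal_def, Measure.prod_apply hST,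
    ← integral_toReal (measurable_measure_prodMk_left hST).aemeasurable
      (ae_of_all _ fun _ => measure_lt_top _ _)]
  rfl

theorem ProbabilityTheory.variance_condExp_indicator {Ω : Type*} {m m₀ : MeasurableSpace Ω}
    {μ : Measure Ω} [IsProbabilityMeasure μ] (hm : m ≤ m₀) {F : Set Ω} (hF : MeasurableSet F) :
    variance (μ[F.indicator (fun _ => (1 : ℝ)) | m]) μ
      = ∫ x in F, (μ[F.indicator (fun _ => (1 : ℝ)) | m]) x ∂μ - μ.real F ^ 2 := by
  set f := F.indicator (fun _ => (1 : ℝ))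
  set g := μ[f | m]
  have hf : MemLp f 2 μ := memLp_indicator_const 2 hF 1 (Or.inr (measure_ne_top μ F))
  have hg : MemLp g 2 μ := hf.condExp one_le_two
  have hmean : μ[g] = μ.real F := by
    rw [integral_condExp hm]
    exact integral_indicator_one hF
  -- `g` is `m`-measurable, so it can be pulled out: `E[g²] = E[g E[f|m]] = E[E[g f|m]] = E[g f]`.
  have hsecond : μ[g ^ 2] = ∫ x in F, g x ∂μ := by
    calc μ[g ^ 2] = μ[g * g] := by rw [sq]
      _ = μ[μ[g * f | m]] := integral_congr_ae (f := g * g)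
          (condExp_mul_of_stronglyMeasurable_left (m := m) stronglyMeasurable_condExp
            (hg.integrable_mul hf) (hf.integrable one_le_two)).symm
      _ = μ[g * f] := integral_condExp hm
      _ = ∫ x in F, g x ∂μ := by
          rw [← integral_indicator hF]
          congr 1
          funext x
          by_cases hx : x ∈ F <;> simp [f, hx]
  rw [variance_eq_sub hg, hsecond, hmean]

theorem Finset.restrict_piecewise {ι : Type*} [DecidableEq ι] {α : ι → Type*} (s : Finset ι)
    (f g : ∀ i, α i) : s.restrict (s.piecewise f g) = s.restrict f :=
  funext fun i => s.piecewise_eq_of_mem f g i.2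

section Resampling

variable {ι : Type*} [Fintype ι] [DecidableEq ι] {α : ι → Type*} [∀ i, MeasurableSpace (α i)]
  (P : ∀ i, Measure (α i)) [∀ i, IsProbabilityMeasure (P i)] (s : Finset ι)

theorem measurePreserving_finset_piecewise :
    MeasurePreserving (fun p : (∀ i, α i) × (∀ i, α i) => s.piecewise p.1 p.2)
      ((Measure.pi P).prod (Measure.pi P)) (Measure.pi P) := by
  have he := measurePreserving_piEquivPiSubtypeProd P (· ∈ s)
  convert he.symm.comp ((measurePreserving_fst.comp he).prod (measurePreserving_snd.comp he))
    using 1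
  funext p i
  by_cases hi : i ∈ s <;> simp [Finset.piecewise, hi, MeasurableEquiv.piEquivPiSubtypeProd,
    Equiv.piEquivPiSubtypeProd]


theorem setIntegral_measureReal_finset_piecewise {S F : Set (∀ i, α i)} (hS : MeasurableSet S)
    (hF : MeasurableSet F) :
    ∫ u in S, (Measure.pi P).real {u' | s.piecewise u u' ∈ F} ∂Measure.pi P
      = ((Measure.pi P).prod (Measure.pi P)).real {p | p.1 ∈ S ∧ s.piecewise p.1 p.2 ∈ F} :=
  Measure.setIntegral_measureReal_prodMk_left _ _ hS
    ((measurePreserving_finset_piecewise P s).measurable hF)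

theorem measurable_measureReal_finset_piecewise {F : Set (∀ i, α i)} (hF : MeasurableSet F) :
    Measurable[MeasurableSpace.comap s.restrict inferInstance]
      fun u => (Measure.pi P).real {u' | s.piecewise u u' ∈ F} := by
  let glue : (∀ i : s, α i) × (∀ i, α i) → ∀ i, α i :=
    fun p i => if h : i ∈ s then p.1 ⟨i, h⟩ else p.2 i
  have hglue : Measurable glue := by
    refine measurable_pi_lambda _ fun i => ?_
    by_cases h : i ∈ s <;> simp only [glue, h, dite_true, dite_false]
    · exact (measurable_pi_apply _).comp measurable_fst
    · exact (measurable_pi_apply _).comp measurable_snd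
  have hG := (measurable_measure_prodMk_left (ν := Measure.pi P) (hglue hF)).ennreal_toReal
  -- `s.piecewise u u'` is definitionally `glue (s.restrict u, u')`.
  exact hG.comp (comap_measurable _)

theorem condExp_indicator_comap_restrict {F : Set (∀ i, α i)} (hF : MeasurableSet F) :
    (Measure.pi P)[F.indicator (fun _ => (1 : ℝ)) | MeasurableSpace.comap s.restrict inferInstance]
      =ᵐ[Measure.pi P] fun u => (Measure.pi P).real {u' | s.piecewise u u' ∈ F} := by
  have hm : MeasurableSpace.comap (s.restrict (π := α)) inferInstance ≤ MeasurableSpace.pi :=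
    (Finset.measurable_restrict s).comap_le
  have hmeas := measurable_measureReal_finset_piecewise P s hF
  have hint : Integrable (fun u => (Measure.pi P).real {u' | s.piecewise u u' ∈ F})
      (Measure.pi P) :=
    Integrable.of_bound (hmeas.mono hm le_rfl).aestronglyMeasurable 1
      (ae_of_all _ fun _ => by simp [abs_of_nonneg measureReal_nonneg])
  refine (ae_eq_condExp_of_forall_setIntegral_eq hm ((integrable_const 1).indicator hF)
    (fun _ _ _ => hint.integrableOn) ?_ hmeas.stronglyMeasurable.aestronglyMeasurable).symm
  rintro _ ⟨t, ht, rfl⟩ -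
  have hS : MeasurableSet (s.restrict ⁻¹' t) := Finset.measurable_restrict s ht
  calc ∫ u in s.restrict ⁻¹' t,
          (Measure.pi P).real {u' | s.piecewise u u' ∈ F} ∂Measure.pi P
      = ((Measure.pi P).prod (Measure.pi P)).real
          {p | p.1 ∈ s.restrict ⁻¹' t ∧ s.piecewise p.1 p.2 ∈ F} :=
        setIntegral_measureReal_finset_piecewise P s hS hF
    _ = ((Measure.pi P).prod (Measure.pi P)).real ((fun p : (∀ i, α i) × (∀ i, α i) =>
          s.piecewise p.1 p.2) ⁻¹' (s.restrict ⁻¹' t ∩ F)) := by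
        congr 1
        ext p
        simp only [Set.mem_ofPred_eq, Set.mem_preimage, Set.mem_inter_iff,
          Finset.restrict_piecewise]
    _ = (Measure.pi P).real (s.restrict ⁻¹' t ∩ F) :=
        (measurePreserving_finset_piecewise P s).measureReal_preimage
          (hS.inter hF).nullMeasurableSet
    _ = _ := by
        rw [setIntegral_indicator hF]
        simp

end Resampling

theorem measurableSet_setOf_le_mulVec {ι κ : Type*} [Fintype ι] [Countable κ] (M : Matrix κ ι ℝ)
    (c : κ → ℝ) : MeasurableSet {u : ι → ℝ | ∀ i, c i ≤ (M *ᵥ u) i} := by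
  rw [Set.ofPred_forall]
  exact .iInter fun i => measurableSet_le measurable_const
    ((continuous_apply i).comp (continuous_const.matrix_mulVec continuous_id)).measurable

instance (ι : Type*) [Fintype ι] : IsProbabilityMeasure (stdGaussian ι) :=
  inferInstanceAs (IsProbabilityMeasure (Measure.pi fun _ : ι => gaussianReal 0 1))

theorem measurePreserving_neg_gaussianReal (v : NNReal) :
    MeasurePreserving (fun x : ℝ => -x) (gaussianReal 0 v) (gaussianReal 0 v) :=
  ⟨measurable_neg, by rw [gaussianReal_map_neg, neg_zero]⟩

theorem measurePreserving_neg_stdGaussian (ι : Type*) [Fintype ι] :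
    MeasurePreserving (MeasurableEquiv.neg (ι → ℝ)) (stdGaussian ι) (stdGaussian ι) :=
  measurePreserving_pi _ _ fun _ => measurePreserving_neg_gaussianReal 1

theorem stdGaussian_setOf_mulVec_le_neg {ι κ : Type*} [Fintype ι] (M : Matrix κ ι ℝ)
    (c : κ → ℝ) :
    stdGaussian ι {u | ∀ i, (M *ᵥ u) i ≤ -c i} = stdGaussian ι {u | ∀ i, c i ≤ (M *ᵥ u) i} := by
  rw [← (measurePreserving_neg_stdGaussian ι).measure_preimage_equiv]
  congr 1
  ext u
  simp [Matrix.mulVec_neg]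

theorem Mblock_mulVec_sumElim (m n : ℕ) (A : Matrix (Fin m) (Fin n) ℝ) (v : Finset (Fin n))
    (u u' : Fin n → ℝ) :
    Mblock m n A v *ᵥ Sum.elim u u' = Sum.elim (A *ᵥ u) (A *ᵥ v.piecewise u u') := by
  ext (i | i) <;>
    simp only [Matrix.mulVec, dotProduct, Fintype.sum_sum_type, Mblock, Sum.elim_inl,
      Sum.elim_inr, Finset.piecewise]
  · simp
  · rw [← Finset.sum_add_distrib]
    refine Finset.sum_congr rfl fun j _ => ?_
    split_ifs <;> simp

theorem stdGaussian_setOf_le_Mblock_mulVec (m n : ℕ) (A : Matrix (Fin m) (Fin n) ℝ)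
    (v : Finset (Fin n)) (β : Fin m → ℝ) :
    stdGaussian (Fin n ⊕ Fin n) {w | ∀ i, Sum.elim β β i ≤ (Mblock m n A v *ᵥ w) i}
      = ((stdGaussian (Fin n)).prod (stdGaussian (Fin n)))
          {p | (∀ i, β i ≤ (A *ᵥ p.1) i) ∧ ∀ i, β i ≤ (A *ᵥ v.piecewise p.1 p.2) i} := by
  have hsplit : MeasurePreserving (MeasurableEquiv.sumPiEquivProdPi fun _ => ℝ).symm
      ((stdGaussian (Fin n)).prod (stdGaussian (Fin n))) (stdGaussian (Fin n ⊕ Fin n)) :=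
    measurePreserving_sumPiEquivProdPi_symm fun _ => gaussianReal 0 1
  rw [← hsplit.measure_preimage_equiv]
  congr 1
  ext ⟨u, u'⟩
  have : (MeasurableEquiv.sumPiEquivProdPi fun _ : Fin n ⊕ Fin n => ℝ).symm (u, u')
      = Sum.elim u u' := by
    ext (j | j) <;> rfl
  simp [this, Mblock_mulVec_sumElim, Sum.forall]

theorem stmt12_general (m n : ℕ) (A : Matrix (Fin m) (Fin n) ℝ)
    (β : Fin m → ℝ) (v : Finset (Fin n)) :
    let μ := stdGaussian (Fin n)
    let Fpar := {u : Fin n → ℝ | ∀ i, β i ≤ A.mulVec u i}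
    let mV : MeasurableSpace (Fin n → ℝ) :=
      MeasurableSpace.comap (fun u (j : {x // x ∈ v}) => u j) inferInstance
    let PhiM : ℝ := (μ {u | ∀ i, A.mulVec u i ≤ -β i}).toReal
    variance (μ[Fpar.indicator (fun _ => (1 : ℝ)) | mV]) μ =
        ((stdGaussian (Fin n ⊕ Fin n))
          {w | ∀ i, (Mblock m n A v).mulVec w i
              ≤ Sum.elim (fun k => -β k) (fun k => -β k) i}).toReal - PhiM ^ 2
      ∧ (μ Fpar).toReal = PhiM := by
  intro μ Fpar
  dsimp only
  have hF : MeasurableSet Fpar := measurableSet_setOf_le_mulVec A β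
  have hP : (μ Fpar).toReal = (μ {u | ∀ i, A.mulVec u i ≤ -β i}).toReal := by
    rw [stdGaussian_setOf_mulVec_le_neg]
  refine ⟨?_, hP⟩
  have hm : MeasurableSpace.comap (fun (u : Fin n → ℝ) (j : {x // x ∈ v}) => u j) inferInstance ≤
      MeasurableSpace.pi := (Finset.measurable_restrict v).comap_le
  have hcond : μ[Fpar.indicator (fun _ => (1 : ℝ)) |
        MeasurableSpace.comap (fun (u : Fin n → ℝ) (j : {x // x ∈ v}) => u j) inferInstance]
      =ᵐ[μ] fun u => μ.real {u' | v.piecewise u u' ∈ Fpar} :=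
    condExp_indicator_comap_restrict (fun _ => gaussianReal 0 1) v hF
  have hneg : Sum.elim (fun k => -β k) (fun k => -β k) = fun i => -Sum.elim β β i := by
    ext (i | i) <;> rfl
  have hjoint : ∫ u in Fpar, μ.real {u' | v.piecewise u u' ∈ Fpar} ∂μ
      = (μ.prod μ).real {p | p.1 ∈ Fpar ∧ v.piecewise p.1 p.2 ∈ Fpar} :=
    setIntegral_measureReal_finset_piecewise _ v hF hF
  rw [variance_condExp_indicator hm hF, integral_congr_ae (ae_restrict_of_ae hcond), hjoint,
    hneg, stdGaussian_setOf_mulVec_le_neg, stdGaussian_setOf_le_Mblock_mulVec, ← hP,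
    measureReal_def, measureReal_def]
  rfl

/-- For the parallel system `F_par = ∩ᵢ {αᵢᵀU ≥ βᵢ}` one has
`Var(E[1_{F_par} | U_v]) = Φ_{2m}(−[B;B]; [[R, R_v],[R_v, R]]) − Φ_m(−B; R)²`,
where `P(F_par) = Φ_m(−B; R)`. -/
theorem stmt12 (m n : ℕ) (A : Matrix (Fin m) (Fin n) ℝ) (hA : ∀ i, ∑ j, (A i j) ^ 2 = 1)
    (β : Fin m → ℝ) (v : Finset (Fin n)) :
    let μ := stdGaussian (Fin n)
    let Fpar := {u : Fin n → ℝ | ∀ i, β i ≤ A.mulVec u i}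
    let mV : MeasurableSpace (Fin n → ℝ) :=
      MeasurableSpace.comap (fun u (j : {x // x ∈ v}) => u j) inferInstance
    let PhiM : ℝ := (μ {u | ∀ i, A.mulVec u i ≤ -β i}).toReal
    variance (μ[Fpar.indicator (fun _ => (1 : ℝ)) | mV]) μ =
        ((stdGaussian (Fin n ⊕ Fin n))
          {w | ∀ i, (Mblock m n A v).mulVec w i
              ≤ Sum.elim (fun k => -β k) (fun k => -β k) i}).toReal - PhiM ^ 2
      ∧ (μ Fpar).toReal = PhiM :=
  stmt12_general m n A β v
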